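/- arXiv:1302.6664 — 2 statements merged into one kernel-verified Lean document; each statement's English description precedes it below -/
import Mathlib

section
/- Let F be a finite field in which -1 is not a square. Suppose E ⊆ P (the paraboloid in F^3) is such that for all point sets A ⊆ F^2 and line sets L with |E|/2 ≤ |A|, |L| ≤ 2|E|, one has |I(A,L)| ≤ C|A|^α. Then |{(a,b,c,d) ∈ E^4 : a + b = c + d}| ≤ C'|E|(|E| + |E|^α) for an absolute constant C' depending on C. -/
/-!
If `a + b = c + d` then `d = a + b - c` is determined by `(a, b, c)` and lies on `P`, so the
energy is at most `∑_{a ∈ E} #{(b, c) ∈ E² : a + b - c ∈ P}`. Pairs with `c = a` contribute at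
most `|E|`. For the others, the Galilean transformation
`(ω, t) ↦ (ω - ω_a, t - 2 ω_a·ω + ω_a·ω_a)` preserves `P` and moves `a` to the origin, after
which `a + b - c ∈ P` reads `ω_b - ω_a ∈ ℓ(ω_c - ω_a)`, where `ℓ(y) = perpLine y`.
As `-1` is not a square, `y ↦ ℓ(y)` is injective, so these pairs inject into the incidences
between the `|E|` points `ω_b - ω_a` and the `|E| - 1` lines `ℓ(ω_c - ω_a)`, of which there are
at most `C|E|^α`.
-/

/-- A line in the plane `F × F`. -/
def IsLine {F : Type} [Field F] (ℓ : Set (F × F)) : Prop :=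
  ∃ a b c : F, (a, b) ≠ (0, 0) ∧ ℓ = {x : F × F | a * x.1 + b * x.2 = c}

/-- The paraboloid `{(ω, ω·ω) : ω ∈ F²} ⊆ F³`. -/
def Paraboloid (F : Type) [Field F] : Set ((F × F) × F) :=
  {p | p.2 = p.1.1 * p.1.1 + p.1.2 * p.1.2}

/-- The number of incidences between a point set and a line set. -/
noncomputable def incCount {F : Type} (A : Finset (F × F)) (L : Finset (Set (F × F))) : ℕ :=
  Set.ncard {p : (F × F) × Set (F × F) | p.1 ∈ A ∧ p.2 ∈ L ∧ p.1 ∈ p.2}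

open Finset

section Counting

variable {α : Type*} [DecidableEq α]

lemma card_filter_le_card_add_card_filter_snd_ne (E : Finset α) (a : α) (p : α × α → Prop)
    [DecidablePred p] :
    #{r ∈ E ×ˢ E | p r} ≤ #E + #{r ∈ E ×ˢ E | r.2 ≠ a ∧ p r} := by
  calc #{r ∈ E ×ˢ E | p r}
      ≤ #{r ∈ E ×ˢ {a} | p r} + #{r ∈ E ×ˢ E | r.2 ≠ a ∧ p r} := by
        refine (card_le_card fun r hr => ?_).trans (card_union_le _ _)
        by_cases hra : r.2 = a <;> grind
    _ ≤ #E + #{r ∈ E ×ˢ E | r.2 ≠ a ∧ p r} := by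
        gcongr
        exact (card_filter_le _ _).trans_eq (by simp)

lemma card_addEnergy_le_sum {G : Type*} [AddCommGroup G] [DecidableEq G] (S : Set G)
    [DecidablePred (· ∈ S)] (E : Finset G) (hE : ↑E ⊆ S) :
    #{q ∈ E ×ˢ E ×ˢ E ×ˢ E | q.1 + q.2.1 = q.2.2.1 + q.2.2.2} ≤
      ∑ a ∈ E, #{r ∈ E ×ˢ E | a + r.1 - r.2 ∈ S} := by
  calc #{q ∈ E ×ˢ E ×ˢ E ×ˢ E | q.1 + q.2.1 = q.2.2.1 + q.2.2.2}
      ≤ #{r ∈ E ×ˢ E ×ˢ E | r.1 + r.2.1 - r.2.2 ∈ S} := by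
        refine card_le_card_of_injOn (fun q => (q.1, q.2.1, q.2.2.1)) ?_ ?_
        · rintro ⟨a, b, c, d⟩ hq
          simp only [mem_coe, mem_filter, mem_product] at hq
          simp only [mem_coe, mem_filter, mem_product]
          refine ⟨⟨hq.1.1, hq.1.2.1, hq.1.2.2.1⟩, ?_⟩
          rw [hq.2, add_sub_cancel_left]
          exact hE hq.1.2.2.2
        · rintro ⟨a, b, c, d⟩ hq ⟨a', b', c', d'⟩ hq' h
          simp only [mem_coe, mem_filter, mem_product, Prod.mk.injEq] at hq hq' h ⊢
          obtain ⟨rfl, rfl, rfl⟩ := h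
          exact ⟨rfl, rfl, rfl, add_left_cancel (hq.2.symm.trans hq'.2)⟩
    _ = ∑ a ∈ E, #{r ∈ E ×ˢ E | a + r.1 - r.2 ∈ S} := by
        simp only [card_filter, sum_product]

end Counting

section Paraboloid

variable {F : Type} [Field F]

lemma two_ne_zero_of_not_exists_sq_eq_neg_one (hF : ¬ ∃ i : F, i ^ 2 = -1) : (2 : F) ≠ 0 :=
  fun h => hF ⟨1, by linear_combination h⟩

lemma eq_zero_and_eq_zero_of_mul_self_add_mul_self_eq_zero (hF : ¬ ∃ i : F, i ^ 2 = -1) {x y : F}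
    (h : x * x + y * y = 0) : x = 0 ∧ y = 0 := by
  by_cases hy : y = 0
  · subst hy
    exact ⟨by simpa using h, rfl⟩
  · exact absurd ⟨x / y, by field_simp; linear_combination h⟩ hF

def perpLine (y : F × F) : Set (F × F) :=
  {x | y.1 * x.1 + y.2 * x.2 = y.1 * y.1 + y.2 * y.2}

lemma mem_perpLine {x y : F × F} :
    x ∈ perpLine y ↔ y.1 * x.1 + y.2 * x.2 = y.1 * y.1 + y.2 * y.2 := Iff.rfl

lemma self_mem_perpLine (y : F × F) : y ∈ perpLine y := rfl

lemma isLine_perpLine {y : F × F} (hy : y ≠ 0) : IsLine (perpLine y) :=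
  ⟨y.1, y.2, _, hy, rfl⟩

lemma perpLine_injective (hF : ¬ ∃ i : F, i ^ 2 = -1) : Function.Injective (perpLine (F := F)) := by
  intro y z h
  have hyz : y ∈ perpLine z := h ▸ self_mem_perpLine y
  have hzy : z ∈ perpLine y := h ▸ self_mem_perpLine z
  rw [mem_perpLine] at hyz hzy
  obtain ⟨h1, h2⟩ := eq_zero_and_eq_zero_of_mul_self_add_mul_self_eq_zero hF
    (x := y.1 - z.1) (y := y.2 - z.2) (by linear_combination -hyz - hzy)
  exact Prod.ext (sub_eq_zero.mp h1) (sub_eq_zero.mp h2)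

lemma mem_paraboloid {p : (F × F) × F} :
    p ∈ Paraboloid F ↔ p.2 = p.1.1 * p.1.1 + p.1.2 * p.1.2 := Iff.rfl

lemma Paraboloid.injOn_fst : Set.InjOn Prod.fst (Paraboloid F) := by
  intro p hp q hq h
  exact Prod.ext h (by rw [hp, hq, h])

lemma Paraboloid.injOn_fst_sub (x : F × F) : Set.InjOn (fun p => p.1 - x) (Paraboloid F) :=
  fun _ hp _ hq h => injOn_fst hp hq (sub_left_injective h)

lemma sub_mem_perpLine_iff_add_sub_mem_paraboloid (h2 : (2 : F) ≠ 0)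
    {a b c : (F × F) × F} (ha : a ∈ Paraboloid F) (hb : b ∈ Paraboloid F)
    (hc : c ∈ Paraboloid F) :
    b.1 - a.1 ∈ perpLine (c.1 - a.1) ↔ a + b - c ∈ Paraboloid F := by
  obtain ⟨⟨u1, u2⟩, ut⟩ := a
  obtain ⟨⟨v1, v2⟩, vt⟩ := b
  obtain ⟨⟨w1, w2⟩, wt⟩ := c
  rw [mem_paraboloid] at ha hb hc
  dsimp only at ha hb hc
  subst ha hb hc
  simp only [mem_perpLine, mem_paraboloid, Prod.mk_sub_mk, Prod.mk_add_mk]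
  constructor <;> intro h
  · linear_combination 2 * h
  · exact mul_left_cancel₀ h2 (by linear_combination h)

end Paraboloid

open Classical in
lemma incCount_eq_card_filter {F : Type} (A : Finset (F × F)) (L : Finset (Set (F × F))) :
    incCount A L = #{p ∈ A ×ˢ L | p.1 ∈ p.2} := by
  rw [incCount, ← Set.ncard_coe_finset]
  congr 1
  ext p
  simp [and_assoc]

section Galilean

variable {F : Type} [Field F] [DecidableEq F] {E : Finset ((F × F) × F)} {a : (F × F) × F}

def SatisfiesIncidenceBound (E : Finset ((F × F) × F)) (C α : ℝ) : Prop :=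
  ∀ (A : Finset (F × F)) (L : Finset (Set (F × F))), (∀ ℓ ∈ L, IsLine ℓ) →
    (#E : ℝ) / 2 ≤ #A → (#A : ℝ) ≤ 2 * #E → (#E : ℝ) / 2 ≤ #L → (#L : ℝ) ≤ 2 * #E →
    (incCount A L : ℝ) ≤ C * (#A : ℝ) ^ α

def galileanPoints (E : Finset ((F × F) × F)) (a : (F × F) × F) : Finset (F × F) :=
  E.image fun b => b.1 - a.1

open Classical in
noncomputable def galileanLines (E : Finset ((F × F) × F)) (a : (F × F) × F) :
    Finset (Set (F × F)) :=
  (E.erase a).image fun c => perpLine (c.1 - a.1)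

lemma card_galileanPoints (hE : ↑E ⊆ Paraboloid F) : #(galileanPoints E a) = #E :=
  card_image_of_injOn ((Paraboloid.injOn_fst_sub a.1).mono hE)

lemma card_galileanLines (hF : ¬ ∃ i : F, i ^ 2 = -1) (hE : ↑E ⊆ Paraboloid F) (ha : a ∈ E) :
    #(galileanLines E a) = #E - 1 := by
  rw [galileanLines, card_image_of_injOn, card_erase_of_mem ha]
  intro b hb c hc h
  exact Paraboloid.injOn_fst_sub a.1 (hE (mem_of_mem_erase hb)) (hE (mem_of_mem_erase hc))
    (perpLine_injective hF h)

lemma isLine_of_mem_galileanLines (hE : ↑E ⊆ Paraboloid F) (ha : a ∈ E) {ℓ : Set (F × F)}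
    (hℓ : ℓ ∈ galileanLines E a) : IsLine ℓ := by
  obtain ⟨c, hc, rfl⟩ := mem_image.mp hℓ
  refine isLine_perpLine (sub_ne_zero.mpr fun h => (mem_erase.mp hc).1 ?_)
  exact Paraboloid.injOn_fst (hE (mem_of_mem_erase hc)) (hE ha) h

lemma card_filter_snd_ne_le_incCount (hF : ¬ ∃ i : F, i ^ 2 = -1) (hE : ↑E ⊆ Paraboloid F)
    (ha : a ∈ E) [DecidablePred (· ∈ Paraboloid F)] :
    #{r ∈ E ×ˢ E | r.2 ≠ a ∧ a + r.1 - r.2 ∈ Paraboloid F} ≤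
      incCount (galileanPoints E a) (galileanLines E a) := by
  classical
  rw [incCount_eq_card_filter]
  refine card_le_card_of_injOn (fun r => (r.1.1 - a.1, perpLine (r.2.1 - a.1))) ?_ ?_
  · rintro ⟨b, c⟩ hr
    simp only [mem_coe, mem_filter, mem_product] at hr ⊢
    obtain ⟨⟨hb, hc⟩, hca, hP⟩ := hr
    refine ⟨⟨mem_image_of_mem _ hb, mem_image_of_mem _ (mem_erase.mpr ⟨hca, hc⟩)⟩, ?_⟩
    exact (sub_mem_perpLine_iff_add_sub_mem_paraboloid (two_ne_zero_of_not_exists_sq_eq_neg_one hF)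
      (hE ha) (hE hb) (hE hc)).mpr hP
  · rintro ⟨b, c⟩ hr ⟨b', c'⟩ hr' h
    simp only [mem_coe, mem_filter, mem_product, Prod.mk.injEq] at hr hr' h ⊢
    exact ⟨Paraboloid.injOn_fst_sub a.1 (hE hr.1.1) (hE hr'.1.1) h.1,
      Paraboloid.injOn_fst_sub a.1 (hE hr.1.2) (hE hr'.1.2) (perpLine_injective hF h.2)⟩

lemma incCount_galilean_le {C α : ℝ} (hC : 0 ≤ C) (hF : ¬ ∃ i : F, i ^ 2 = -1)
    (hE : ↑E ⊆ Paraboloid F) (ha : a ∈ E) (hinc : SatisfiesIncidenceBound E C α) :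
    (incCount (galileanPoints E a) (galileanLines E a) : ℝ) ≤ C * (#E : ℝ) ^ α := by
  have hL := card_galileanLines hF hE ha
  rcases lt_or_ge #E 2 with hE2 | hE2
  · rw [card_eq_zero.mp (show #(galileanLines E a) = 0 by omega), incCount_eq_card_filter]
    simpa using by positivity
  · have hL' : (#(galileanLines E a) : ℝ) = #E - 1 := by
      rw [hL, Nat.cast_sub (by omega), Nat.cast_one]
    have hE2' : (2 : ℝ) ≤ #E := by exact_mod_cast hE2
    have hA := card_galileanPoints hE (a := a)
    have := hinc _ _ (fun _ => isLine_of_mem_galileanLines hE ha) (by rw [hA]; linarith)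
      (by rw [hA]; linarith) (by rw [hL']; linarith) (by rw [hL']; linarith)
    rwa [hA] at this

lemma card_filter_add_sub_mem_paraboloid_le {C α : ℝ} (hC : 0 ≤ C)
    (hF : ¬ ∃ i : F, i ^ 2 = -1) (hE : ↑E ⊆ Paraboloid F) (ha : a ∈ E)
    (hinc : SatisfiesIncidenceBound E C α) [DecidablePred (· ∈ Paraboloid F)] :
    (#{r ∈ E ×ˢ E | a + r.1 - r.2 ∈ Paraboloid F} : ℝ) ≤ #E + C * (#E : ℝ) ^ α := by
  have hsplit := (card_filter_le_card_add_card_filter_snd_ne E a _).trans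
    (Nat.add_le_add_left (card_filter_snd_ne_le_incCount hF hE ha) _)
  have hsplit' : (#{r ∈ E ×ˢ E | a + r.1 - r.2 ∈ Paraboloid F} : ℝ) ≤
      #E + incCount (galileanPoints E a) (galileanLines E a) := by
    exact_mod_cast hsplit
  linarith [incCount_galilean_le hC hF hE ha hinc]

end Galilean

/-- If `E ⊆ P` satisfies an incidence estimate `|I(A,L)| ≤ C|A|^α` for all point/line
sets of size comparable to `|E|`, then the additive energy of `E` satisfies
`|{(a,b,c,d) ∈ E⁴ : a+b = c+d}| ≤ C'|E|(|E| + |E|^α)` for a constant `C'` depending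
only on `C` (and `α`). -/
theorem energy_from_incidence (C α : ℝ) (hC : 0 ≤ C) :
    ∃ C' : ℝ, 0 ≤ C' ∧
      ∀ (F : Type) [Field F] [Fintype F] [DecidableEq F],
        (¬ ∃ i : F, i ^ 2 = -1) →
        ∀ E : Finset ((F × F) × F), ↑E ⊆ Paraboloid F →
        (∀ (A : Finset (F × F)) (L : Finset (Set (F × F))),
            (∀ ℓ ∈ L, IsLine ℓ) →
            (E.card : ℝ) / 2 ≤ A.card → (A.card : ℝ) ≤ 2 * E.card →
            (E.card : ℝ) / 2 ≤ L.card → (L.card : ℝ) ≤ 2 * E.card →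
            (incCount A L : ℝ) ≤ C * (A.card : ℝ) ^ α) →
        ((((E ×ˢ E ×ˢ E ×ˢ E).filter
            (fun q => q.1 + q.2.1 = q.2.2.1 + q.2.2.2)).card : ℝ) ≤
          C' * E.card * ((E.card : ℝ) + (E.card : ℝ) ^ α)) := by
  refine ⟨C + 1, by positivity, fun F _ _ _ hF E hE hinc => ?_⟩
  classical
  have hN : (0 : ℝ) ≤ #E := Nat.cast_nonneg _
  have hNα : (0 : ℝ) ≤ (#E : ℝ) ^ α := Real.rpow_nonneg hN α
  calc (#{q ∈ E ×ˢ E ×ˢ E ×ˢ E | q.1 + q.2.1 = q.2.2.1 + q.2.2.2} : ℝ)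
      ≤ ∑ a ∈ E, (#{r ∈ E ×ˢ E | a + r.1 - r.2 ∈ Paraboloid F} : ℝ) := by
        exact_mod_cast card_addEnergy_le_sum _ E hE
    _ ≤ ∑ _a ∈ E, ((#E : ℝ) + C * (#E : ℝ) ^ α) :=
        sum_le_sum fun a ha => card_filter_add_sub_mem_paraboloid_le hC hF hE ha hinc
    _ = #E * ((#E : ℝ) + C * (#E : ℝ) ^ α) := by rw [sum_const, nsmul_eq_mul]
    _ ≤ (C + 1) * #E * ((#E : ℝ) + (#E : ℝ) ^ α) := by
        nlinarith [mul_nonneg hN hNα, mul_nonneg hC (mul_nonneg hN hN)]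
end

section
/- Let F be a finite field of odd characteristic with nontrivial additive character e. For the paraboloid P = {(ω, ω·ω) : ω ∈ F^2} ⊆ F^3 with normalized surface measure, the inverse Fourier transform (dσ)^∨(x) = (1/|P|) Σ_{ξ ∈ P} e(x·ξ) satisfies |(dσ)^∨(x)| ≤ |F|^{-1} for all x ≠ 0. (The Fourier dimension of P is 2.) -/
/-!
The sum over `ω ∈ F²` factors into two one-variable sums `∑ₜ e(Q(t))`, `Q(t) = bt + at²`, with `a = x₃`.
If `x₃ = 0`, then `x̄ ≠ 0` and one factor is the complete sum of a nontrivial linear character,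
hence zero. If `x₃ ≠ 0`, each factor is a Gauss sum of modulus `|F|^{1/2}`: in `S · S̄`, substituting
`t = s + h` turns `Q(t) - Q(s)` into `Q(h) + 2ahs`, and summing over `s` kills every `h ≠ 0`.
-/

open Finset ComplexConjugate

lemma AddChar.sum_prod_map_add {α β A R : Type*} [Fintype α] [Fintype β] [AddMonoid A]
    [CommSemiring R] (ψ : AddChar A R) (f : α → A) (g : β → A) :
    ∑ ω : α × β, ψ (f ω.1 + g ω.2) = (∑ s, ψ (f s)) * ∑ t, ψ (g t) := by
  simp only [Fintype.sum_prod_type, AddChar.map_add_eq_mul, sum_mul_sum]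

section QuadraticSum

variable {F : Type*} [Field F] [Fintype F]

lemma sum_addChar_mul_eq_zero {R : Type*} [CommRing R] [IsDomain R] {e : AddChar F R}
    (he : e ≠ 1) {c : F} (hc : c ≠ 0) : ∑ t, e (c * t) = 0 :=
  AddChar.sum_eq_zero_of_ne_one (AddChar.IsPrimitive.of_ne_one he hc)

variable {e : AddChar F ℂ}

lemma sum_addChar_quadratic_mul_conj (h2 : (2 : F) ≠ 0) (he : e ≠ 1) {a : F} (ha : a ≠ 0)
    (b : F) :
    (∑ t, e (b * t + a * (t * t))) * conj (∑ t, e (b * t + a * (t * t))) = Fintype.card F := by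
  set Q : F → F := fun t ↦ b * t + a * (t * t)
  have hdiff : ∀ s h, Q (s + h) - Q s = Q h + 2 * a * h * s := fun s h ↦ by simp only [Q]; ring
  calc (∑ t, e (Q t)) * conj (∑ t, e (Q t))
      = ∑ s, ∑ t, e (Q t - Q s) := by
        simp only [map_sum, sum_mul_sum, sub_eq_add_neg, AddChar.map_add_eq_mul,
          AddChar.map_neg_eq_conj]
        exact sum_comm
    _ = ∑ s, ∑ h, e (Q (s + h) - Q s) :=
        sum_congr rfl fun s _ ↦ (Equiv.sum_comp (Equiv.addLeft s) fun t ↦ e (Q t - Q s)).symm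
    _ = ∑ h, e (Q h) * ∑ s, e (2 * a * h * s) := by
        simp only [hdiff, AddChar.map_add_eq_mul, mul_sum]
        exact sum_comm
    _ = Fintype.card F := by
        rw [sum_eq_single 0 (fun h _ hh ↦ by
          rw [sum_addChar_mul_eq_zero he (by simp [h2, ha, hh]), mul_zero]) (by simp)]
        simp [Q]

lemma norm_sum_addChar_quadratic (h2 : (2 : F) ≠ 0) (he : e ≠ 1) {a : F} (ha : a ≠ 0) (b : F) :
    ‖∑ t, e (b * t + a * (t * t))‖ = √(Fintype.card F) := by
  have hsq := sum_addChar_quadratic_mul_conj h2 he ha b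
  rw [Complex.mul_conj'] at hsq
  rw [← Real.sqrt_sq (norm_nonneg _)]
  exact congrArg Real.sqrt (mod_cast hsq)

end QuadraticSum

/-- Fourier decay of the paraboloid: for `x ≠ 0`,
`|(dσ)^∨(x)| ≤ |F|⁻¹`, i.e. the paraboloid has Fourier dimension 2. -/
theorem paraboloid_fourier_decay {F : Type*} [Field F] [Fintype F]
    (hchar : ringChar F ≠ 2) (e : AddChar F ℂ) (he : e ≠ 1)
    (x : (F × F) × F) (hx : x ≠ 0) :
    ‖((Fintype.card F : ℂ) ^ 2)⁻¹ *
        ∑ ω : F × F, e (x.1.1 * ω.1 + x.1.2 * ω.2 + x.2 * (ω.1 * ω.1 + ω.2 * ω.2))‖ ≤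
      (Fintype.card F : ℝ)⁻¹ := by
  obtain ⟨⟨x₁, x₂⟩, x₃⟩ := x
  have hsplit : ∑ ω : F × F, e (x₁ * ω.1 + x₂ * ω.2 + x₃ * (ω.1 * ω.1 + ω.2 * ω.2)) =
      (∑ t, e (x₁ * t + x₃ * (t * t))) * ∑ t, e (x₂ * t + x₃ * (t * t)) := by
    rw [← AddChar.sum_prod_map_add]
    exact sum_congr rfl fun ω _ ↦ congrArg e (by ring)
  simp only [hsplit, norm_mul, norm_inv, norm_pow, Complex.norm_natCast]
  rcases eq_or_ne x₃ 0 with rfl | hx₃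
  · have hx₁₂ : x₁ ≠ 0 ∨ x₂ ≠ 0 := by
      by_contra! h
      exact hx (by simp [h.1, h.2])
    rcases hx₁₂ with h | h <;> simp [sum_addChar_mul_eq_zero he h]
  · have h2 : (2 : F) ≠ 0 := Ring.two_ne_zero hchar
    rw [norm_sum_addChar_quadratic h2 he hx₃, norm_sum_addChar_quadratic h2 he hx₃,
      Real.mul_self_sqrt (Nat.cast_nonneg _)]
    have hq : (Fintype.card F : ℝ) ≠ 0 := Nat.cast_ne_zero.2 Fintype.card_ne_zero
    rw [sq, mul_inv, mul_assoc, inv_mul_cancel₀ hq, mul_one]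
end
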